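/- arXiv:1103.2612 — 3 statements merged into one kernel-verified Lean document; each statement's English description precedes it below -/
import Mathlib

section
/- Let S ⊆ ℝⁿ be a full-dimensional simplex with vertices v_0, …, v_n and diameter δ = max{‖x − x′‖ : x, x′ ∈ S}, let U ⊆ ℝᵐ be a compact set, let f : ℝⁿ → ℝⁿ be of class C² and g : ℝⁿ → ℝ^{n×m} be of class C¹ on a neighborhood of S. Let A ∈ ℝ^{n×n} and a ∈ ℝⁿ be the affine interpolant of f at the vertices, i.e. A v_i + a = f(v_i) for all i ∈ {0,…,n}, and let B = (1/(n+1)) Σ_{i=0}^{n} g(v_i). Then for every component index l ∈ {1,…,n}, every x ∈ S and every u ∈ U, |f_l(x) + g_{l•}(x)·u − A_{l•}·x − B_{l•}·u − a_l| ≤ α_l δ² + β_l δ max_{u∈U} ‖u‖, where α_l = (1/2) max_{x∈S} ρ(H(f_l)(x)) is half the maximum over S of the spectral radius of the Hessian matrix of f_l, and β_l = max_{x∈S} ‖J(g_{l•})(x)‖ is the maximum over S of the operator norm (induced by the Euclidean norm) of the Jacobian matrix of the l-th row g_{l•} of g. -/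
/-!
Split the error into `f_l(x) - (A_{l•}·x + a_l)` and `g_{l•}(x)·u - B_{l•}·u`.

For the first part, note that `z ↦ A_{l•}·z + a_l - Df_l(x)(z - x)` is affine and differs from
`f_l(x)` at the vertex `v_i` by exactly the first-order Taylor remainder of `f_l` at `x` in the
direction `v_i - x`. By Taylor's theorem with integral remainder, that remainder is bounded by
`½ max_S ρ(H(f_l)) ‖v_i - x‖² ≤ α_l δ²`, because the quadratic form of a symmetric matrix is bounded
by its spectral radius. The set of points where an affine function stays within `α_l δ²` of
`f_l(x)` is convex, so it contains all of `S`, and in particular `x`.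

For the second part, `B_{l•}·u` is the average of the numbers `g_{l•}(v_i)·u`. By the mean value
inequality and Cauchy–Schwarz, each of them is within `β_l δ ‖u‖` of `g_{l•}(x)·u`.
-/

open Matrix Set

/-- Reinterpret a plain vector as an element of Euclidean space. -/
def toEuc {n : ℕ} (x : Fin n → ℝ) : EuclideanSpace ℝ (Fin n) := WithLp.toLp 2 x

/-- The spectral radius of a real matrix: the largest absolute value of an element
of its (real) spectrum.  For the (symmetric) Hessian matrices considered here this
is the usual spectral radius. -/
noncomputable def specRad {n : ℕ} (M : Matrix (Fin n) (Fin n) ℝ) : ℝ :=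
  sSup ((fun μ => |μ|) '' spectrum ℝ M)

/-- The Hessian matrix of `φ : ℝⁿ → ℝ` at `x`, with entries the second partial
derivatives of `φ`. -/
noncomputable def hessMat {n : ℕ} (φ : EuclideanSpace ℝ (Fin n) → ℝ)
    (x : EuclideanSpace ℝ (Fin n)) : Matrix (Fin n) (Fin n) ℝ :=
  fun i j => iteratedFDeriv ℝ 2 φ x
    ![EuclideanSpace.single i (1 : ℝ), EuclideanSpace.single j (1 : ℝ)]

theorem abs_sub_sub_fderiv_le_half {E : Type*} [NormedAddCommGroup E] [NormedSpace ℝ E]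
    {φ : E → ℝ} {x h : E} {K : ℝ}
    (hφ : ∀ t ∈ Icc (0 : ℝ) 1, ContDiffAt ℝ 2 φ (x + t • h))
    (hK : ∀ t ∈ Icc (0 : ℝ) 1, |iteratedFDeriv ℝ 2 φ (x + t • h) (fun _ => h)| ≤ K) :
    |φ (x + h) - φ x - fderiv ℝ φ x h| ≤ K / 2 := by
  have htaylor := map_add_eq_sum_add_integral_iteratedFDeriv (n := 1) hφ
  simp only [Nat.reduceAdd, smul_eq_mul, Finset.sum_range_succ, Finset.range_one,
    Finset.sum_singleton, Nat.factorial_zero, Nat.factorial_one, Nat.cast_one, inv_one, one_mul,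
    iteratedFDeriv_zero_apply, iteratedFDeriv_one_apply, pow_one] at htaylor
  rw [htaylor, add_assoc, add_sub_cancel_left, add_sub_cancel_left]
  calc |∫ t in (0 : ℝ)..1, (1 - t) * iteratedFDeriv ℝ 2 φ (x + t • h) (fun _ => h)|
      ≤ ∫ t in (0 : ℝ)..1, (1 - t) * K := by
        rw [← Real.norm_eq_abs]
        apply intervalIntegral.norm_integral_le_of_norm_le zero_le_one
        · refine Filter.Eventually.of_forall fun t ht => ?_
          rw [Real.norm_eq_abs, abs_mul, abs_of_nonneg (by linarith [ht.2])]
          exact mul_le_mul_of_nonneg_left (hK t (Ioc_subset_Icc_self ht)) (by linarith [ht.2])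
        · exact (by fun_prop : Continuous fun t : ℝ => (1 - t) * K).intervalIntegrable 0 1
    _ = K / 2 := by
        rw [intervalIntegral.integral_mul_const, intervalIntegral.integral_sub
          intervalIntegrable_const intervalIntegral.intervalIntegrable_id, integral_id]
        norm_num
        ring

lemma specRad_nonneg {n : ℕ} (M : Matrix (Fin n) (Fin n) ℝ) : 0 ≤ specRad M :=
  Real.sSup_nonneg (by rintro _ ⟨μ, -, rfl⟩; exact abs_nonneg μ)

lemma Matrix.IsHermitian.abs_eigenvalues_le_specRad {n : ℕ} {M : Matrix (Fin n) (Fin n) ℝ}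
    (hM : M.IsHermitian) (i : Fin n) : |hM.eigenvalues i| ≤ specRad M :=
  le_csSup (M.finite_spectrum.image _).bddAbove ⟨_, hM.eigenvalues_mem_spectrum_real i, rfl⟩

theorem Matrix.IsHermitian.abs_dotProduct_mulVec_le_specRad_mul {n : ℕ}
    {M : Matrix (Fin n) (Fin n) ℝ} (hM : M.IsHermitian) (h : Fin n → ℝ) :
    |h ⬝ᵥ M *ᵥ h| ≤ specRad M * (h ⬝ᵥ h) := by
  set U : Matrix (Fin n) (Fin n) ℝ := ↑hM.eigenvectorUnitary
  set y := star U *ᵥ h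
  have hy : h ᵥ* U = y := by
    simp only [y, star_eq_conjTranspose, conjTranspose_eq_transpose_of_trivial, mulVec_transpose]
  have hquad : h ⬝ᵥ M *ᵥ h = ∑ i, hM.eigenvalues i * (y i * y i) := by
    -- `M = U D Uᴴ` with `D` the diagonal matrix of eigenvalues, so `hᵀ M h = yᵀ D y`.
    conv_lhs => rw [hM.spectral_theorem, Unitary.conjStarAlgAut_apply]
    rw [← mulVec_mulVec, ← mulVec_mulVec, dotProduct_mulVec, hy, dotProduct]
    simp only [mulVec_diagonal, Function.comp_apply, RCLike.ofReal_real_eq_id, id]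
    exact Finset.sum_congr rfl fun i _ => by ring
  have hnorm : h ⬝ᵥ h = ∑ i, y i * y i := by
    calc h ⬝ᵥ h = h ⬝ᵥ (U * star U) *ᵥ h := by
          rw [Unitary.mul_star_self_of_mem hM.eigenvectorUnitary.2, one_mulVec]
      _ = y ⬝ᵥ y := by rw [← mulVec_mulVec, dotProduct_mulVec, hy]
  rw [hquad, hnorm, Finset.mul_sum]
  refine (Finset.abs_sum_le_sum_abs _ _).trans (Finset.sum_le_sum fun i _ => ?_)
  rw [abs_mul, abs_mul_self]
  exact mul_le_mul_of_nonneg_right (hM.abs_eigenvalues_le_specRad i) (mul_self_nonneg _)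

section Hessian

variable {n : ℕ} (φ : EuclideanSpace ℝ (Fin n) → ℝ) (z : EuclideanSpace ℝ (Fin n))

lemma hessMat_eq_toMatrix₂ :
    hessMat φ z = LinearMap.toMatrix₂ (EuclideanSpace.basisFun (Fin n) ℝ).toBasis
      (EuclideanSpace.basisFun (Fin n) ℝ).toBasis (fderiv ℝ (fderiv ℝ φ) z).toLinearMap₁₂ := by
  ext i j
  simp [hessMat, iteratedFDeriv_two_apply]

lemma iteratedFDeriv_two_apply_eq_dotProduct_hessMat (h : EuclideanSpace ℝ (Fin n)) :
    iteratedFDeriv ℝ 2 φ z (fun _ => h) = h ⬝ᵥ hessMat φ z *ᵥ h := by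
  rw [iteratedFDeriv_two_apply, hessMat_eq_toMatrix₂]
  exact apply_eq_dotProduct_toMatrix₂_mulVec (EuclideanSpace.basisFun (Fin n) ℝ).toBasis
    (EuclideanSpace.basisFun (Fin n) ℝ).toBasis (fderiv ℝ (fderiv ℝ φ) z).toLinearMap₁₂ h h

variable {φ z}

lemma hessMat_isHermitian (hφ : ContDiffAt ℝ 2 φ z) : (hessMat φ z).IsHermitian := by
  ext i j
  simp only [conjTranspose_apply, star_trivial, hessMat, iteratedFDeriv_two_apply]
  exact hφ.isSymmSndFDerivAt (by simp) _ _

lemma abs_iteratedFDeriv_two_apply_le (hφ : ContDiffAt ℝ 2 φ z) (h : EuclideanSpace ℝ (Fin n)) :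
    |iteratedFDeriv ℝ 2 φ z (fun _ => h)| ≤ specRad (hessMat φ z) * ‖h‖ ^ 2 := by
  rw [iteratedFDeriv_two_apply_eq_dotProduct_hessMat, ← real_inner_self_eq_norm_sq]
  exact (hessMat_isHermitian hφ).abs_dotProduct_mulVec_le_specRad_mul h

end Hessian

theorem abs_sub_sub_fderiv_le_of_specRad_le {n : ℕ} {φ : EuclideanSpace ℝ (Fin n) → ℝ}
    {S V : Set (EuclideanSpace ℝ (Fin n))} (hV : IsOpen V) (hSV : S ⊆ V) (hS : Convex ℝ S)
    (hφ : ContDiffOn ℝ 2 φ V) {α : ℝ} (hα : ∀ ξ ∈ S, 1 / 2 * specRad (hessMat φ ξ) ≤ α)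
    {x y : EuclideanSpace ℝ (Fin n)} (hx : x ∈ S) (hy : y ∈ S) :
    |φ y - φ x - fderiv ℝ φ x (y - x)| ≤ α * ‖y - x‖ ^ 2 := by
  have hseg : ∀ t ∈ Icc (0 : ℝ) 1, x + t • (y - x) ∈ S := fun t ht => hS.add_smul_sub_mem hx hy ht
  have hφ' : ∀ t ∈ Icc (0 : ℝ) 1, ContDiffAt ℝ 2 φ (x + t • (y - x)) :=
    fun t ht => hφ.contDiffAt (hV.mem_nhds (hSV (hseg t ht)))
  have key := abs_sub_sub_fderiv_le_half hφ' (K := 2 * α * ‖y - x‖ ^ 2) fun t ht =>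
    (abs_iteratedFDeriv_two_apply_le (hφ' t ht) _).trans
      (by have := hα _ (hseg t ht); gcongr; linarith)
  rwa [add_sub_cancel, mul_assoc, mul_div_cancel_left₀ _ two_ne_zero] at key

theorem norm_sub_interpolant_le {E F ι : Type*} [AddCommGroup E] [Module ℝ E]
    [NormedAddCommGroup F] [NormedSpace ℝ F] {v : ι → E} {x : E} (hx : x ∈ convexHull ℝ (range v))
    {φ : E → F} (ℓ D : E →ₗ[ℝ] F) (c : F) (hinterp : ∀ i, ℓ (v i) + c = φ (v i)) {C : ℝ}
    (hC : ∀ i, ‖φ (v i) - φ x - D (v i - x)‖ ≤ C) :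
    ‖φ x - (ℓ x + c)‖ ≤ C := by
  have hball : Convex ℝ ((ℓ - D) ⁻¹' Metric.closedBall (φ x - c - D x) C) :=
    (convex_closedBall _ _).linear_preimage (ℓ - D)
  have hv : range v ⊆ (ℓ - D) ⁻¹' Metric.closedBall (φ x - c - D x) C := by
    rintro _ ⟨i, rfl⟩
    have hrem : (ℓ - D) (v i) - (φ x - c - D x) = φ (v i) - φ x - D (v i - x) := by
      rw [LinearMap.sub_apply, map_sub, ← hinterp i]
      abel
    rw [mem_preimage, Metric.mem_closedBall, dist_eq_norm, hrem]
    exact hC i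
  have hxball := convexHull_min hv hball hx
  have hrem : (ℓ - D) x - (φ x - c - D x) = -(φ x - (ℓ x + c)) := by
    rw [LinearMap.sub_apply]
    abel
  rwa [mem_preimage, Metric.mem_closedBall, dist_eq_norm, hrem, norm_neg] at hxball

theorem abs_dotProduct_sub_le {E : Type*} [NormedAddCommGroup E] [NormedSpace ℝ E] {m : ℕ}
    {G : E → EuclideanSpace ℝ (Fin m)} {S : Set E} (hS : Convex ℝ S)
    (hG : ∀ y ∈ S, DifferentiableAt ℝ G y) {β : ℝ} (hβ : ∀ y ∈ S, ‖fderiv ℝ G y‖ ≤ β)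
    {x y : E} (hx : x ∈ S) (hy : y ∈ S) (u : EuclideanSpace ℝ (Fin m)) :
    |G x ⬝ᵥ u - G y ⬝ᵥ u| ≤ β * ‖x - y‖ * ‖u‖ := by
  have hinner : G x ⬝ᵥ u - G y ⬝ᵥ u = inner ℝ (G x - G y) u := by
    rw [EuclideanSpace.inner_eq_star_dotProduct, star_trivial, WithLp.ofLp_sub, dotProduct_sub,
      dotProduct_comm u, dotProduct_comm u]
  rw [hinner]
  calc |inner ℝ (G x - G y) u| ≤ ‖G x - G y‖ * ‖u‖ := abs_real_inner_le_norm _ _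
    _ ≤ β * ‖x - y‖ * ‖u‖ := by
      gcongr
      exact hS.norm_image_sub_le_of_norm_fderiv_le hG hβ hy hx

lemma abs_sub_sum_mul_le {ι : Type*} (s : Finset ι) {w b : ι → ℝ} {a C : ℝ}
    (hw₀ : ∀ i ∈ s, 0 ≤ w i) (hw₁ : ∑ i ∈ s, w i = 1) (h : ∀ i ∈ s, |a - b i| ≤ C) :
    |a - ∑ i ∈ s, w i * b i| ≤ C := by
  have := (convex_closedBall a C).sum_mem hw₀ hw₁ fun i hi => by
    rw [Metric.mem_closedBall, Real.dist_eq, abs_sub_comm]; exact h i hi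
  rwa [Metric.mem_closedBall, Real.dist_eq, abs_sub_comm] at this

theorem hybridization_error_bound_general
    (n mdim : ℕ) (v : Fin (n + 1) → EuclideanSpace ℝ (Fin n))
    (S : Set (EuclideanSpace ℝ (Fin n)))
    (hS : S = convexHull ℝ (Set.range v))
    (δ : ℝ) (hδ : IsGreatest {d : ℝ | ∃ x ∈ S, ∃ y ∈ S, d = ‖x - y‖} δ)
    (U : Set (EuclideanSpace ℝ (Fin mdim)))
    (V : Set (EuclideanSpace ℝ (Fin n))) (hVopen : IsOpen V) (hSV : S ⊆ V)
    (f : EuclideanSpace ℝ (Fin n) → EuclideanSpace ℝ (Fin n))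
    (hf : ContDiffOn ℝ 2 f V)
    (g : EuclideanSpace ℝ (Fin n) → Matrix (Fin n) (Fin mdim) ℝ)
    (hg : ∀ l : Fin n, ContDiffOn ℝ 1 (fun y => toEuc (g y l)) V)
    (A : Matrix (Fin n) (Fin n) ℝ) (a : EuclideanSpace ℝ (Fin n))
    (hinterp : ∀ i, toEuc (A *ᵥ v i) + a = f (v i))
    (B : Matrix (Fin n) (Fin mdim) ℝ)
    (hB : B = (((n : ℝ) + 1)⁻¹) • ∑ i : Fin (n + 1), g (v i))
    (α : Fin n → ℝ)
    (hα : ∀ l, IsGreatest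
        ((fun y => (1 / 2) * specRad (hessMat (fun z => f z l) y)) '' S) (α l))
    (β : Fin n → ℝ)
    (hβ : ∀ l, IsGreatest
        ((fun y => ‖fderiv ℝ (fun z => toEuc (g z l)) y‖) '' S) (β l))
    (Mu : ℝ) (hMu : IsGreatest ((fun u => ‖u‖) '' U) Mu)
    (l : Fin n) (x : EuclideanSpace ℝ (Fin n)) (hx : x ∈ S)
    (u : EuclideanSpace ℝ (Fin mdim)) (hu : u ∈ U) :
    |f x l + g x l ⬝ᵥ u - A l ⬝ᵥ x - B l ⬝ᵥ u - a l|
      ≤ α l * δ ^ 2 + β l * δ * Mu := by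
  have hconv : Convex ℝ S := hS ▸ convex_convexHull ℝ _
  have hvS : ∀ i, v i ∈ S := fun i => hS ▸ subset_convexHull ℝ _ (mem_range_self i)
  have hdiam : ∀ y ∈ S, ∀ z ∈ S, ‖y - z‖ ≤ δ := fun y hy z hz => hδ.2 ⟨y, hy, z, hz, rfl⟩
  have hδ₀ : 0 ≤ δ := (norm_nonneg _).trans (hdiam x hx x hx)
  have hα₀ : 0 ≤ α l :=
    (mul_nonneg one_half_pos.le (specRad_nonneg _)).trans ((hα l).2 ⟨x, hx, rfl⟩)
  have hβ₀ : 0 ≤ β l := (norm_nonneg _).trans ((hβ l).2 ⟨x, hx, rfl⟩)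
  have hfpart : |f x l - (A l ⬝ᵥ x + a l)| ≤ α l * δ ^ 2 := by
    have hfl : ContDiffOn ℝ 2 (fun z => f z l) V :=
      (EuclideanSpace.proj (𝕜 := ℝ) (ι := Fin n) l).contDiff.comp_contDiffOn hf
    refine norm_sub_interpolant_le (φ := fun z => f z l) (hS ▸ hx)
      ((EuclideanSpace.proj l : EuclideanSpace ℝ (Fin n) →L[ℝ] ℝ).toLinearMap ∘ₗ toLpLin 2 2 A)
      (fderiv ℝ (fun z => f z l) x) (a l) (fun i => congrArg (· l) (hinterp i)) fun i => ?_
    refine (abs_sub_sub_fderiv_le_of_specRad_le hVopen hSV hconv hfl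
      (fun ξ hξ => (hα l).2 ⟨ξ, hξ, rfl⟩) hx (hvS i)).trans ?_
    gcongr
    exact hdiam _ (hvS i) _ hx
  have hgpart : |g x l ⬝ᵥ u - B l ⬝ᵥ u| ≤ β l * δ * Mu := by
    have hBl : B l ⬝ᵥ u = ∑ i, ((n : ℝ) + 1)⁻¹ * (g (v i) l ⬝ᵥ u) := by
      simp only [hB, dotProduct, Matrix.smul_apply, Matrix.sum_apply, smul_eq_mul, Finset.mul_sum,
        Finset.sum_mul, mul_assoc]
      exact Finset.sum_comm
    rw [hBl]
    refine abs_sub_sum_mul_le _ (fun _ _ => by positivity)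
      (by simp [mul_inv_cancel₀ (Nat.cast_add_one_ne_zero (R := ℝ) n)]) fun i _ => ?_
    refine (abs_dotProduct_sub_le (G := fun z => toEuc (g z l)) hconv
      (fun y hy => ((hg l).contDiffAt (hVopen.mem_nhds (hSV hy))).differentiableAt one_ne_zero)
      (fun y hy => (hβ l).2 ⟨y, hy, rfl⟩) hx (hvS i) u).trans ?_
    gcongr
    · exact hdiam _ hx _ (hvS i)
    · exact hMu.2 ⟨u, hu, rfl⟩
  calc |f x l + g x l ⬝ᵥ u - A l ⬝ᵥ x - B l ⬝ᵥ u - a l|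
      = |(f x l - (A l ⬝ᵥ x + a l)) + (g x l ⬝ᵥ u - B l ⬝ᵥ u)| := by congr 1; ring
    _ ≤ α l * δ ^ 2 + β l * δ * Mu := (abs_add_le _ _).trans (add_le_add hfpart hgpart)

/-- Proposition 1 of the paper.
Let `S ⊆ ℝⁿ` be a full-dimensional simplex with vertices `v 0, …, v n` and diameter `δ`,
`U ⊆ ℝᵐ` compact, `f` of class `C²` and `g` of class `C¹` on a neighborhood of `S`.
Let `A, a` be the affine interpolant of `f` at the vertices and
`B = (1/(n+1)) ∑ᵢ g(vᵢ)`.  Then for every `l`, `x ∈ S` and `u ∈ U`,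
`|f_l(x) + g_{l•}(x)·u − A_{l•}·x − B_{l•}·u − a_l| ≤ α_l δ² + β_l δ max_{u∈U}‖u‖`,
where `α_l = (1/2) max_{x∈S} ρ(H(f_l)(x))` and `β_l = max_{x∈S} ‖J(g_{l•})(x)‖`
(operator norm induced by the Euclidean norm, here the Fréchet derivative norm). -/
theorem hybridization_error_bound
    (n mdim : ℕ) (v : Fin (n + 1) → EuclideanSpace ℝ (Fin n))
    (hv : AffineIndependent ℝ v)
    (S : Set (EuclideanSpace ℝ (Fin n)))
    (hS : S = convexHull ℝ (Set.range v))
    (δ : ℝ) (hδ : IsGreatest {d : ℝ | ∃ x ∈ S, ∃ y ∈ S, d = ‖x - y‖} δ)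
    (U : Set (EuclideanSpace ℝ (Fin mdim))) (hU : IsCompact U)
    (V : Set (EuclideanSpace ℝ (Fin n))) (hVopen : IsOpen V) (hSV : S ⊆ V)
    (f : EuclideanSpace ℝ (Fin n) → EuclideanSpace ℝ (Fin n))
    (hf : ContDiffOn ℝ 2 f V)
    (g : EuclideanSpace ℝ (Fin n) → Matrix (Fin n) (Fin mdim) ℝ)
    (hg : ∀ l : Fin n, ContDiffOn ℝ 1 (fun y => toEuc (g y l)) V)
    (A : Matrix (Fin n) (Fin n) ℝ) (a : EuclideanSpace ℝ (Fin n))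
    (hinterp : ∀ i, toEuc (A *ᵥ v i) + a = f (v i))
    (B : Matrix (Fin n) (Fin mdim) ℝ)
    (hB : B = (((n : ℝ) + 1)⁻¹) • ∑ i : Fin (n + 1), g (v i))
    (α : Fin n → ℝ)
    (hα : ∀ l, IsGreatest
        ((fun y => (1 / 2) * specRad (hessMat (fun z => f z l) y)) '' S) (α l))
    (β : Fin n → ℝ)
    (hβ : ∀ l, IsGreatest
        ((fun y => ‖fderiv ℝ (fun z => toEuc (g z l)) y‖) '' S) (β l))
    (Mu : ℝ) (hMu : IsGreatest ((fun u => ‖u‖) '' U) Mu)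
    (l : Fin n) (x : EuclideanSpace ℝ (Fin n)) (hx : x ∈ S)
    (u : EuclideanSpace ℝ (Fin mdim)) (hu : u ∈ U) :
    |f x l + g x l ⬝ᵥ u - A l ⬝ᵥ x - B l ⬝ᵥ u - a l|
      ≤ α l * δ ^ 2 + β l * δ * Mu :=
  hybridization_error_bound_general n mdim v S hS δ hδ U V hVopen hSV f hf g hg A a hinterp B hB α
    hα β hβ Mu hMu l x hx u hu
end

section
/- Let S ⊆ ℝⁿ be a full-dimensional simplex with vertices v_0, …, v_n, facets F_0, …, F_n and outward unit normals m_0, …, m_n. Let A ∈ ℝ^{n×n}, a ∈ ℝⁿ, and let W ⊆ ℝⁿ be a nonempty convex compact set. If a trajectory x of the disturbed affine system ẋ(t) = A x(t) + a + w(t) (with w continuous and w(t) ∈ W for all t) satisfies x(0) ∈ S and exits S at time T ≥ 0, then there exists j ∈ {0,…,n} such that x(T) ∈ F_j and F_j is not blocked. -/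
open Matrix Set

/-- `x` is a trajectory of the disturbed system `ẋ(t) = F(x(t)) + w(t)`, `w(t) ∈ W`,
on `[0, ∞)`, for some continuous disturbance `w`. -/
def IsTrajectory {n : ℕ} (F : EuclideanSpace ℝ (Fin n) → EuclideanSpace ℝ (Fin n))
    (W : Set (EuclideanSpace ℝ (Fin n))) (x : ℝ → EuclideanSpace ℝ (Fin n)) : Prop :=
  ∃ w : ℝ → EuclideanSpace ℝ (Fin n),
    ContinuousOn w (Set.Ici 0) ∧ (∀ t ∈ Set.Ici (0 : ℝ), w t ∈ W) ∧
      ∀ t ∈ Set.Ici (0 : ℝ), HasDerivWithinAt x (F (x t) + w t) (Set.Ici 0) t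

/-- The trajectory `x` exits the set `S` at time `T ≥ 0`. -/
def ExitsAt {n : ℕ} (S : Set (EuclideanSpace ℝ (Fin n)))
    (x : ℝ → EuclideanSpace ℝ (Fin n)) (T : ℝ) : Prop :=
  0 ≤ T ∧ ∃ ε > (0 : ℝ),
    (∀ t ∈ Set.Icc 0 T, x t ∈ S) ∧ ∀ t ∈ Set.Ioo T (T + ε), x t ∉ S

/-! Suppose every facet through `x T` is blocked. In barycentric coordinates `λᵢ` of `S`, the
coordinates that are positive at `x T` stay positive for a while. For an active facet `j`
(`λⱼ (x T) = 0`), `-λⱼ'` is bounded by the affine function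
`(⟪m j, A x + a⟫ + sup ⟪m j, W⟫) / (c j - ⟪m j, v j⟫)` of `x`, which is nonpositive at the vertices
of `F_j` because `F_j` is blocked; expanding it in barycentric coordinates bounds `-λⱼ'` by a
constant times `Σ_{i active} max (-λᵢ) 0` whenever `λⱼ ≤ 0`. Grönwall's inequality for this sum,
which vanishes at `T`, keeps `x` in `S` on some `[T, T + δ]`, contradicting the exit at `T`. -/

open Filter Topology

theorem AffineMap.hasDerivWithinAt_comp {E F : Type*} [NormedAddCommGroup E] [NormedSpace ℝ E]
    [FiniteDimensional ℝ E] [NormedAddCommGroup F] [NormedSpace ℝ F] (f : E →ᵃ[ℝ] F)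
    {x : ℝ → E} {x' : E} {s : Set ℝ} {t : ℝ} (hx : HasDerivWithinAt x x' s t) :
    HasDerivWithinAt (fun u => f (x u)) (f.linear x') s t := by
  rw [f.decomp]
  exact (LinearMap.toContinuousLinearMap f.linear).hasFDerivAt.comp_hasDerivWithinAt t hx
    |>.add_const (f 0)

theorem hasDerivWithinAt_Ici_max_zero {g : ℝ → ℝ} {g' t : ℝ}
    (hg : HasDerivWithinAt g g' (Ici t) t) :
    HasDerivWithinAt (fun s => max (g s) 0)
      (if 0 < g t then g' else if g t = 0 then max g' 0 else 0) (Ici t) t := by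
  rcases lt_trichotomy (g t) 0 with hneg | hzero | hpos
  · rw [if_neg hneg.not_gt, if_neg hneg.ne]
    refine (hasDerivWithinAt_const t _ (0 : ℝ)).congr_of_eventuallyEq ?_ (max_eq_right hneg.le)
    filter_upwards [hg.continuousWithinAt.eventually_lt_const hneg] with s hs
    exact max_eq_right hs.le
  · rw [if_neg hzero.not_gt, if_pos hzero]
    rw [← hasDerivWithinAt_Ioi_iff_Ici,
      hasDerivWithinAt_iff_tendsto_slope' (s := Ioi t) (lt_irrefl t)] at hg ⊢
    refine (hg.max tendsto_const_nhds).congr' ?_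
    filter_upwards [self_mem_nhdsWithin] with s (hs : t < s)
    simp only [slope_def_field, hzero, max_self, sub_zero]
    rw [← max_div_div_right (sub_pos.2 hs).le, zero_div]
  · rw [if_pos hpos]
    refine hg.congr_of_eventuallyEq ?_ (max_eq_left hpos.le)
    filter_upwards [hg.continuousWithinAt.eventually_const_lt hpos] with s hs
    exact max_eq_left hs.le

theorem nonpos_of_deriv_right_le_mul_sum_max_zero {ι : Type*} (J : Finset ι)
    {g g' : ι → ℝ → ℝ} {K a b : ℝ}
    (hcont : ∀ j ∈ J, ContinuousOn (g j) (Icc a b))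
    (hderiv : ∀ j ∈ J, ∀ t ∈ Ico a b, HasDerivWithinAt (g j) (g' j t) (Ici t) t)
    (ha : ∀ j ∈ J, g j a ≤ 0)
    (hbound : ∀ j ∈ J, ∀ t ∈ Ico a b, 0 ≤ g j t → g' j t ≤ K * ∑ i ∈ J, max (g i t) 0) :
    ∀ t ∈ Icc a b, ∀ j ∈ J, g j t ≤ 0 := by
  set f : ℝ → ℝ := fun t => ∑ j ∈ J, max (g j t) 0
  set f' : ℝ → ℝ := fun t => ∑ j ∈ J,
    if 0 < g j t then g' j t else if g j t = 0 then max (g' j t) 0 else 0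
  have hf_nonneg (t : ℝ) : 0 ≤ f t := Finset.sum_nonneg fun j _ => le_max_right _ _
  have hf_cont : ContinuousOn f (Icc a b) :=
    continuousOn_finsetSum J fun j hj => (hcont j hj).sup continuousOn_const
  have hf_deriv (t : ℝ) (ht : t ∈ Ico a b) : HasDerivWithinAt f (f' t) (Ici t) t :=
    HasDerivWithinAt.fun_sum fun j hj => hasDerivWithinAt_Ici_max_zero (hderiv j hj t ht)
  have hfa : f a ≤ 0 :=
    (Finset.sum_eq_zero fun j hj => max_eq_right (ha j hj)).le
  have hf'_le (t : ℝ) (ht : t ∈ Ico a b) : f' t ≤ (J.card * |K|) * f t + 0 := by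
    have hterm : ∀ j ∈ J,
        (if 0 < g j t then g' j t else if g j t = 0 then max (g' j t) 0 else 0) ≤ |K| * f t := by
      intro j hj
      have hKf : max (K * f t) 0 ≤ |K| * f t :=
        max_le (mul_le_mul_of_nonneg_right (le_abs_self K) (hf_nonneg t))
          (mul_nonneg (abs_nonneg K) (hf_nonneg t))
      refine le_trans ?_ hKf
      split_ifs with hpos hzero
      · exact (hbound j hj t ht hpos.le).trans (le_max_left _ _)
      · exact max_le_max (hbound j hj t ht hzero.ge) le_rfl
      · exact le_max_right _ _
    calc f' t ≤ ∑ _j ∈ J, |K| * f t := Finset.sum_le_sum hterm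
      _ = (J.card * |K|) * f t + 0 := by rw [Finset.sum_const, nsmul_eq_mul]; ring
  intro t ht j hj
  have hft : f t ≤ 0 := by
    simpa only [gronwallBound_ε0_δ0] using le_gronwallBound_of_liminf_deriv_right_le hf_cont
      (fun s hs r hr => (hf_deriv s hs).liminf_right_slope_le hr) hfa hf'_le t ht
  calc g j t ≤ max (g j t) 0 := le_max_left _ _
    _ ≤ f t := Finset.single_le_sum (f := fun i => max (g i t) 0) (fun i _ => le_max_right _ _) hj
    _ ≤ 0 := hft

namespace AffineBasis

section CommRing

variable {ι k V P V₂ : Type*} [Fintype ι] [CommRing k] [AddCommGroup V] [Module k V]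
  [AddTorsor V P] [AddCommGroup V₂] [Module k V₂]

theorem apply_eq_sum_coord_smul (b : AffineBasis ι k P) (f : P →ᵃ[k] V₂) (q : P) :
    f q = ∑ i, b.coord i q • f (b i) := by
  have hw := b.sum_coord_apply_eq_one q
  conv_lhs => rw [← b.affineCombination_coord_eq_self q]
  rw [Finset.map_affineCombination _ _ _ hw,
    Finset.affineCombination_eq_linear_combination _ _ _ hw]
  rfl

theorem eq_smul_coord_of_apply_eq_zero (b : AffineBasis ι k P) (f : P →ᵃ[k] k) {j : ι}
    (hf : ∀ i ≠ j, f (b i) = 0) : f = f (b j) • b.coord j := by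
  ext q
  rw [b.apply_eq_sum_coord_smul f q,
    Finset.sum_eq_single j (fun i _ hi => by rw [hf i hi, smul_zero])
      (fun h => absurd (Finset.mem_univ j) h),
    AffineMap.coe_smul, Pi.smul_apply, smul_eq_mul, smul_eq_mul, mul_comm]

end CommRing

section OrderedField

variable {ι R E : Type*} [Fintype ι] [Field R] [LinearOrder R] [IsStrictOrderedRing R]
  [AddCommGroup E] [Module R E]

theorem mem_convexHull_image_ne_of_coord_eq_zero (b : AffineBasis ι R E) {j : ι} {y : E}
    (hy : ∀ i, 0 ≤ b.coord i y) (hj : b.coord j y = 0) :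
    y ∈ convexHull R (b '' {i | i ≠ j}) := by
  classical
  have hsum : ∑ i ∈ Finset.univ.erase j, b.coord i y = 1 := by
    rw [Finset.sum_erase (f := fun i => b.coord i y) _ hj, b.sum_coord_apply_eq_one]
  have hy_eq : ∑ i ∈ Finset.univ.erase j, b.coord i y • b i = y := by
    rw [Finset.sum_erase (f := fun i => b.coord i y • b i) _ (by rw [hj, zero_smul]),
      b.linear_combination_coord_eq_self]
  rw [← hy_eq]
  exact (convex_convexHull R _).sum_mem (fun i _ => hy i) hsum fun i hi =>
    subset_convexHull R _ (mem_image_of_mem b (Finset.ne_of_mem_erase hi))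

theorem neg_sum_le_apply (b : AffineBasis ι R E) (ψ : E →ᵃ[R] R) (J : Finset ι) {j : ι} {y : E}
    (hψ : ∀ i ≠ j, 0 ≤ ψ (b i)) (hj : b.coord j y ≤ 0) (hJ : ∀ i ∉ J, 0 ≤ b.coord i y) :
    -∑ i ∈ J, |ψ (b i)| * max (-b.coord i y) 0 ≤ ψ y := by
  have hterm (i : ι) : -(|ψ (b i)| * max (-b.coord i y) 0) ≤ b.coord i y • ψ (b i) := by
    rw [smul_eq_mul]
    rcases le_or_gt 0 (b.coord i y) with hc | hc
    · rw [max_eq_right (neg_nonpos.2 hc), mul_zero, neg_zero]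
      by_cases hij : i = j
      · rw [le_antisymm (hij ▸ hj) hc, zero_mul]
      · exact mul_nonneg hc (hψ i hij)
    · rw [max_eq_left (neg_nonneg.2 hc.le)]
      nlinarith [le_abs_self (ψ (b i))]
  have houtside : ∀ i ∈ Finset.univ, i ∉ J → |ψ (b i)| * max (-b.coord i y) 0 = 0 :=
    fun i _ hi => by rw [max_eq_right (neg_nonpos.2 (hJ i hi)), mul_zero]
  rw [b.apply_eq_sum_coord_smul ψ y, Finset.sum_subset (Finset.subset_univ J) houtside,
    ← Finset.sum_neg_distrib]
  exact Finset.sum_le_sum fun i _ => hterm i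

end OrderedField

theorem eventually_coord_nonneg_of_inward {ι E : Type*} [Fintype ι]
    [NormedAddCommGroup E] [NormedSpace ℝ E] [FiniteDimensional ℝ E]
    (b : AffineBasis ι ℝ E) {x x' : ℝ → E} {T : ℝ}
    (hx : ∀ t ∈ Ici T, HasDerivWithinAt x (x' t) (Ici T) t)
    (hxT : ∀ i, 0 ≤ b.coord i (x T)) (ψ : ι → E →ᵃ[ℝ] ℝ)
    (hψb : ∀ j, b.coord j (x T) = 0 → ∀ i ≠ j, 0 ≤ ψ j (b i))
    (hψx : ∀ j, b.coord j (x T) = 0 → ∀ t ∈ Ici T, ψ j (x t) ≤ (b.coord j).linear (x' t)) :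
    ∀ᶠ t in 𝓝[≥] T, ∀ i, 0 ≤ b.coord i (x t) := by
  classical
  set J := Finset.univ.filter fun j => b.coord j (x T) = 0
  have hcoord_cont (i : ι) : ContinuousOn (fun t => b.coord i (x t)) (Ici T) :=
    (b.coord i).continuous_of_finiteDimensional.comp_continuousOn fun t ht =>
      (hx t ht).continuousWithinAt
  have hinactive : ∀ᶠ t in 𝓝[≥] T, ∀ i ∉ J, 0 < b.coord i (x t) := by
    refine eventually_all.2 fun i => ?_
    by_cases hi : i ∈ J
    · exact Eventually.of_forall fun _ h => absurd hi h
    · have hpos : 0 < b.coord i (x T) :=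
        (hxT i).lt_of_ne' fun h => hi (Finset.mem_filter.2 ⟨Finset.mem_univ i, h⟩)
      exact ((hcoord_cont i T self_mem_Ici).eventually_const_lt hpos).mono fun _ h _ => h
  obtain ⟨u, hTu, hu⟩ := mem_nhdsGE_iff_exists_Icc_subset.1 hinactive
  obtain ⟨K, hK⟩ := Finite.exists_le fun p : ι × ι => |ψ p.1 (b p.2)|
  have hactive := nonpos_of_deriv_right_le_mul_sum_max_zero J (K := K) (a := T) (b := u)
    (g := fun j t => -b.coord j (x t)) (g' := fun j t => -(b.coord j).linear (x' t))
    (fun j _ => ((hcoord_cont j).mono Icc_subset_Ici_self).neg)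
    (fun j _ t ht => ((b.coord j).hasDerivWithinAt_comp
      ((hx t ht.1).mono (Ici_subset_Ici.2 ht.1))).neg)
    (fun j hj => (neg_eq_zero.2 (Finset.mem_filter.1 hj).2).le)
    (fun j hj t ht hjt => by
      have hj0 := (Finset.mem_filter.1 hj).2
      have hψ := b.neg_sum_le_apply (ψ j) J (hψb j hj0) (neg_nonneg.1 hjt)
        fun i hi => (hu (Ico_subset_Icc_self ht) i hi).le
      calc -(b.coord j).linear (x' t) ≤ -ψ j (x t) := neg_le_neg (hψx j hj0 t ht.1)
        _ ≤ ∑ i ∈ J, |ψ j (b i)| * max (-b.coord i (x t)) 0 := neg_le.1 hψ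
        _ ≤ ∑ i ∈ J, K * max (-b.coord i (x t)) 0 :=
          Finset.sum_le_sum fun i _ => mul_le_mul_of_nonneg_right (hK (j, i)) (le_max_right _ _)
        _ = K * ∑ i ∈ J, max (-b.coord i (x t)) 0 := (Finset.mul_sum _ _ _).symm)
  filter_upwards [Icc_mem_nhdsGE hTu] with t ht i
  by_cases hi : i ∈ J
  · exact neg_nonpos.1 (hactive t ht i hi)
  · exact (hu ht i hi).le

theorem inner_eq_mul_coord_linear {ι E : Type*} [Fintype ι] [NormedAddCommGroup E]
    [InnerProductSpace ℝ E] (b : AffineBasis ι ℝ E) {m : E} {c : ℝ} {j : ι}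
    (hm : ∀ i ≠ j, inner ℝ (b i) m = c) (u : E) :
    inner ℝ u m = (inner ℝ (b j) m - c) * (b.coord j).linear u := by
  let ℓ : E →ᵃ[ℝ] ℝ := (innerₛₗ ℝ m).toAffineMap - AffineMap.const ℝ E c
  have hℓ := congrArg (fun f : E →ᵃ[ℝ] ℝ => f.linear u)
    (b.eq_smul_coord_of_apply_eq_zero ℓ fun i hi =>
      sub_eq_zero.2 ((real_inner_comm _ _).trans (hm i hi)))
  simpa [ℓ, real_inner_comm m] using hℓ

-- `inner ℝ y (m j)`, not `inner ℝ (m j) y`: it is what `m j ⬝ᵥ y` unfolds to on `EuclideanSpace`.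
theorem eventually_coord_nonneg_of_facets_blocked {ι E : Type*} [Fintype ι]
    [NormedAddCommGroup E] [InnerProductSpace ℝ E] [FiniteDimensional ℝ E]
    (b : AffineBasis ι ℝ E) (F : E →ᵃ[ℝ] E) {m : ι → E} {c M : ι → ℝ}
    (hm_facet : ∀ j i, i ≠ j → inner ℝ (b i) (m j) = c j)
    (hm_out : ∀ j, inner ℝ (b j) (m j) < c j) {x w : ℝ → E} {T : ℝ}
    (hx : ∀ t ∈ Ici T, HasDerivWithinAt x (F (x t) + w t) (Ici T) t)
    (hw : ∀ j, ∀ t ∈ Ici T, inner ℝ (w t) (m j) ≤ M j)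
    (hxT : ∀ i, 0 ≤ b.coord i (x T))
    (hblocked : ∀ j, b.coord j (x T) = 0 → ∀ i ≠ j, inner ℝ (F (b i)) (m j) ≤ -M j) :
    ∀ᶠ t in 𝓝[≥] T, ∀ i, 0 ≤ b.coord i (x t) := by
  set d := fun j => c j - inner ℝ (b j) (m j)
  have hd (j : ι) : 0 < d j := sub_pos.2 (hm_out j)
  have hlin (j : ι) (u : E) : inner ℝ u (m j) = -d j * (b.coord j).linear u := by
    rw [b.inner_eq_mul_coord_linear (hm_facet j) u, neg_sub]
  let ψ (j : ι) : E →ᵃ[ℝ] ℝ :=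
    (b.coord j).linear.toAffineMap.comp F - AffineMap.const ℝ E (M j / d j)
  have hψ (j : ι) (y : E) : ψ j y = (b.coord j).linear (F y) - M j / d j := rfl
  refine b.eventually_coord_nonneg_of_inward hx hxT ψ (fun j hj i hij => ?_) (fun j _ t ht => ?_)
  · have hvert := hblocked j hj i hij
    rw [hlin] at hvert
    rw [hψ, sub_nonneg, div_le_iff₀ (hd j)]
    linarith
  · have hwt := hw j t ht
    rw [hlin] at hwt
    have hdiv : -(M j / d j) ≤ (b.coord j).linear (w t) := by
      rw [neg_le, le_div_iff₀ (hd j)]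
      linarith
    rw [hψ, map_add]
    linarith

end AffineBasis

theorem exit_point_on_unblocked_facet_general
    (n : ℕ) (v : Fin (n + 1) → EuclideanSpace ℝ (Fin n))
    (hv : AffineIndependent ℝ v)
    (S : Set (EuclideanSpace ℝ (Fin n)))
    (hS : S = convexHull ℝ (Set.range v))
    (A : Matrix (Fin n) (Fin n) ℝ) (a : EuclideanSpace ℝ (Fin n))
    (W : Set (EuclideanSpace ℝ (Fin n)))
    (hWcomp : IsCompact W)
    (m : Fin (n + 1) → EuclideanSpace ℝ (Fin n)) (c : Fin (n + 1) → ℝ)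
    (hm_facet : ∀ j i, i ≠ j → m j ⬝ᵥ v i = c j)
    (hm_out : ∀ j, m j ⬝ᵥ v j < c j)
    (x : ℝ → EuclideanSpace ℝ (Fin n))
    (hx : IsTrajectory (fun y => toEuc (A *ᵥ y) + a) W x)
    (T : ℝ) (hT : ExitsAt S x T) :
    ∃ j : Fin (n + 1),
      x T ∈ convexHull ℝ (v '' {i | i ≠ j}) ∧
      ¬ (∀ y ∈ convexHull ℝ (v '' {i | i ≠ j}),
          m j ⬝ᵥ (toEuc (A *ᵥ y) + a) ≤ - sSup ((fun w : EuclideanSpace ℝ (Fin n) => m j ⬝ᵥ w) '' W)) := by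
  obtain ⟨w, -, hwW, hxw⟩ := hx
  obtain ⟨hT0, ε, hε, hin, hout⟩ := hT
  by_contra! hblocked
  let b : AffineBasis (Fin (n + 1)) ℝ (EuclideanSpace ℝ (Fin n)) :=
    ⟨v, hv, hv.affineSpan_eq_top_iff_card_eq_finrank_add_one.2 (by simp)⟩
  have hSb : S = {y | ∀ i, 0 ≤ b.coord i y} := hS.trans b.convexHull_eq_nonneg_coord
  have hxT : x T ∈ {y | ∀ i, 0 ≤ b.coord i y} := hSb ▸ hin T ⟨hT0, le_rfl⟩
  let F : EuclideanSpace ℝ (Fin n) →ᵃ[ℝ] EuclideanSpace ℝ (Fin n) :=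
    (Matrix.toEuclideanLin A).toAffineMap + AffineMap.const ℝ _ a
  have hstay : ∀ᶠ t in 𝓝[≥] T, x t ∈ S := by
    rw [hSb]
    refine b.eventually_coord_nonneg_of_facets_blocked F hm_facet hm_out (w := w)
      (M := fun j => sSup ((fun w : EuclideanSpace ℝ (Fin n) => m j ⬝ᵥ w) '' W))
      (fun t ht => (hxw t (hT0.trans ht)).mono (Ici_subset_Ici.2 hT0))
      (fun j t ht => le_csSup
        (hWcomp.bddAbove_image (continuous_id.inner continuous_const).continuousOn)
        (mem_image_of_mem _ (hwW t (hT0.trans ht)))) hxT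
      fun j hj i hij => hblocked j (b.mem_convexHull_image_ne_of_coord_eq_zero hxT hj) (v i)
        (subset_convexHull ℝ _ (mem_image_of_mem v hij))
  have hleave : ∀ᶠ t in 𝓝[>] T, x t ∉ S :=
    Filter.mem_of_superset (Ioo_mem_nhdsGT (by linarith)) hout
  obtain ⟨t, hS_t, hnS_t⟩ :=
    ((hstay.filter_mono (nhdsWithin_mono T Ioi_subset_Ici_self)).and hleave).exists
  exact hnS_t hS_t

/-- Proposition 3 of the paper.
If a trajectory of the disturbed affine system `ẋ = A x + a + w`, `w(t) ∈ W`,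
starting in the simplex `S` exits `S` at time `T ≥ 0`, then `x(T)` belongs to a
facet of `S` that is not blocked. -/
theorem exit_point_on_unblocked_facet
    (n : ℕ) (v : Fin (n + 1) → EuclideanSpace ℝ (Fin n))
    (hv : AffineIndependent ℝ v)
    (S : Set (EuclideanSpace ℝ (Fin n)))
    (hS : S = convexHull ℝ (Set.range v))
    (A : Matrix (Fin n) (Fin n) ℝ) (a : EuclideanSpace ℝ (Fin n))
    (W : Set (EuclideanSpace ℝ (Fin n)))
    (hWne : W.Nonempty) (hWconv : Convex ℝ W) (hWcomp : IsCompact W)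
    (m : Fin (n + 1) → EuclideanSpace ℝ (Fin n)) (c : Fin (n + 1) → ℝ)
    (hm_unit : ∀ j, ‖m j‖ = 1)
    (hm_facet : ∀ j i, i ≠ j → m j ⬝ᵥ v i = c j)
    (hm_out : ∀ j, m j ⬝ᵥ v j < c j)
    (x : ℝ → EuclideanSpace ℝ (Fin n))
    (hx : IsTrajectory (fun y => toEuc (A *ᵥ y) + a) W x)
    (hx0 : x 0 ∈ S)
    (T : ℝ) (hT : ExitsAt S x T) :
    ∃ j : Fin (n + 1),
      x T ∈ convexHull ℝ (v '' {i | i ≠ j}) ∧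
      ¬ (∀ y ∈ convexHull ℝ (v '' {i | i ≠ j}),
          m j ⬝ᵥ (toEuc (A *ᵥ y) + a) ≤ - sSup ((fun w : EuclideanSpace ℝ (Fin n) => m j ⬝ᵥ w) '' W)) :=
  exit_point_on_unblocked_facet_general n v hv S hS A a W hWcomp m c hm_facet hm_out x hx T hT
end

section
/- Let S ⊆ ℝⁿ be a full-dimensional simplex, let U ⊆ ℝᵐ be a compact convex polytope, let W ⊆ ℝⁿ be a nonempty convex compact set, let f : ℝⁿ → ℝⁿ and g : ℝⁿ → ℝ^{n×m} be continuous on S, and let A ∈ ℝ^{n×n}, B ∈ ℝ^{n×m}, a ∈ ℝⁿ satisfy the conservativeness condition: for all x ∈ S and all u ∈ U, f(x) + g(x)u − A x − B u − a ∈ W. Let h : S → U be an affine map with h(x) ∈ U for all x ∈ S, let F be a facet of S with outward unit normal m, and suppose m·(A v + B h(v) + a) ≤ −max_{w∈W} m·w for every vertex v of F. Then m·(f(x) + g(x) h(x)) ≤ 0 for every x ∈ F. -/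
open Matrix Set

/-!
On the facet, `f x + g x h(x)` splits as the disturbance `w ∈ W`, whose component along `m` is
at most `max_W m·w`, plus the closed-loop affine field `A x + B h(x) + a`.  Since `h` is affine,
`x ↦ m·(A x + B h(x) + a)` is an affine function, so its bound `-max_W m·w` at the vertices of
the facet propagates to their convex hull.  The two bounds cancel.
-/

theorem AffineMap.le_of_mem_convexHull {𝕜 E : Type*} [Field 𝕜] [LinearOrder 𝕜]
    [IsStrictOrderedRing 𝕜] [AddCommGroup E] [Module 𝕜 E]
    (φ : E →ᵃ[𝕜] 𝕜) {s : Set E} {r : 𝕜} (hs : ∀ y ∈ s, φ y ≤ r) {x : E}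
    (hx : x ∈ convexHull 𝕜 s) : φ x ≤ r :=
  convexHull_min ((image_subset_iff (t := Iic r)).2 hs) (convex_Iic r)
    (φ.image_convexHull s ▸ mem_image_of_mem φ hx)

noncomputable def EuclideanSpace.dotProductLeft {n : ℕ} (m : EuclideanSpace ℝ (Fin n)) :
    EuclideanSpace ℝ (Fin n) →ₗ[ℝ] ℝ :=
  dotProductBilin ℝ ℝ (WithLp.ofLp m) ∘ₗ (WithLp.linearEquiv 2 ℝ (Fin n → ℝ)).toLinearMap

noncomputable def closedLoopField {n p : ℕ} (A : Matrix (Fin n) (Fin n) ℝ)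
    (B : Matrix (Fin n) (Fin p) ℝ) (K : Matrix (Fin p) (Fin n) ℝ) (k : EuclideanSpace ℝ (Fin p))
    (a : EuclideanSpace ℝ (Fin n)) :
    EuclideanSpace ℝ (Fin n) →ᵃ[ℝ] EuclideanSpace ℝ (Fin n) :=
  (toEuclideanLin A).toAffineMap +
    (toEuclideanLin B).toAffineMap.comp ((toEuclideanLin K).toAffineMap + AffineMap.const ℝ _ k) +
    AffineMap.const ℝ _ a

theorem dotProduct_closedLoopField_le_of_mem_convexHull {n p : ℕ}
    (A : Matrix (Fin n) (Fin n) ℝ) (B : Matrix (Fin n) (Fin p) ℝ)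
    (K : Matrix (Fin p) (Fin n) ℝ) (k : EuclideanSpace ℝ (Fin p)) (a m : EuclideanSpace ℝ (Fin n))
    {s : Set (EuclideanSpace ℝ (Fin n))} {r : ℝ}
    (hs : ∀ y ∈ s, m ⬝ᵥ (toEuc (A *ᵥ y) + toEuc (B *ᵥ (toEuc (K *ᵥ y) + k)) + a) ≤ r)
    {x : EuclideanSpace ℝ (Fin n)} (hx : x ∈ convexHull ℝ s) :
    m ⬝ᵥ (toEuc (A *ᵥ x) + toEuc (B *ᵥ (toEuc (K *ᵥ x) + k)) + a) ≤ r :=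
  ((EuclideanSpace.dotProductLeft m).toAffineMap.comp
    (closedLoopField A B K k a)).le_of_mem_convexHull hs hx

theorem facet_blocked_for_nonlinear_system_general
    (n mdim : ℕ) (v : Fin (n + 1) → EuclideanSpace ℝ (Fin n))
    (S : Set (EuclideanSpace ℝ (Fin n)))
    (hS : S = convexHull ℝ (Set.range v))
    (U : Set (EuclideanSpace ℝ (Fin mdim)))
    (W : Set (EuclideanSpace ℝ (Fin n)))
    (hWcomp : IsCompact W)
    (f : EuclideanSpace ℝ (Fin n) → EuclideanSpace ℝ (Fin n))
    (g : EuclideanSpace ℝ (Fin n) → Matrix (Fin n) (Fin mdim) ℝ)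
    (A : Matrix (Fin n) (Fin n) ℝ) (B : Matrix (Fin n) (Fin mdim) ℝ)
    (a : EuclideanSpace ℝ (Fin n))
    (hcons : ∀ x ∈ S, ∀ u ∈ U,
      f x + toEuc (g x *ᵥ u) - toEuc (A *ᵥ x) - toEuc (B *ᵥ u) - a ∈ W)
    (K : Matrix (Fin mdim) (Fin n) ℝ) (k : EuclideanSpace ℝ (Fin mdim))
    (h : EuclideanSpace ℝ (Fin n) → EuclideanSpace ℝ (Fin mdim))
    (hh : ∀ x, h x = toEuc (K *ᵥ x) + k)
    (hhU : ∀ x ∈ S, h x ∈ U)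
    (j : Fin (n + 1))
    (m : EuclideanSpace ℝ (Fin n))
    (hvert : ∀ i, i ≠ j →
      m ⬝ᵥ (toEuc (A *ᵥ v i) + toEuc (B *ᵥ h (v i)) + a)
        ≤ - sSup ((fun w : EuclideanSpace ℝ (Fin n) => m ⬝ᵥ w) '' W))
    (x : EuclideanSpace ℝ (Fin n))
    (hx : x ∈ convexHull ℝ (v '' {i | i ≠ j})) :
    m ⬝ᵥ (f x + toEuc (g x *ᵥ h x)) ≤ 0 := by
  have hxS : x ∈ S := hS ▸ convexHull_mono (image_subset_range v _) hx
  set M := sSup ((fun w : EuclideanSpace ℝ (Fin n) => m ⬝ᵥ w) '' W)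
  set w := f x + toEuc (g x *ᵥ h x) - toEuc (A *ᵥ x) - toEuc (B *ᵥ h x) - a
  have hdist : m ⬝ᵥ w ≤ M :=
    le_csSup (hWcomp.bddAbove_image (by fun_prop))
      (mem_image_of_mem _ (hcons x hxS (h x) (hhU x hxS)))
  have hdrift : m ⬝ᵥ (toEuc (A *ᵥ x) + toEuc (B *ᵥ h x) + a) ≤ -M := by
    simp only [hh] at hvert ⊢
    exact dotProduct_closedLoopField_le_of_mem_convexHull A B K k a m
      (by rintro _ ⟨i, hi, rfl⟩; exact hvert i hi) hx
  calc m ⬝ᵥ (f x + toEuc (g x *ᵥ h x))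
      = m ⬝ᵥ w + m ⬝ᵥ (toEuc (A *ᵥ x) + toEuc (B *ᵥ h x) + a) := by
        simp only [w, WithLp.ofLp_add, WithLp.ofLp_sub, dotProduct_add, dotProduct_sub]
        ring
    _ ≤ M + -M := add_le_add hdist hdrift
    _ = 0 := add_neg_cancel M

/-- key step in the proof of Proposition 9 of the paper.
Let `S` be a full-dimensional simplex, `U` a compact convex polytope, `W` a nonempty
convex compact set, and suppose the affine data `(A, B, a, W)` is conservative for the
control system `(f, g)` on `S`.  If `h` is an affine map sending `S` into `U` and `F`
is a facet of `S` with outward unit normal `m` such that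
`m·(A v + B h(v) + a) ≤ - max_{w∈W} m·w` at every vertex `v` of `F`, then
`m·(f(x) + g(x) h(x)) ≤ 0` for every `x ∈ F`. -/
theorem facet_blocked_for_nonlinear_system
    (n mdim : ℕ) (v : Fin (n + 1) → EuclideanSpace ℝ (Fin n))
    (hv : AffineIndependent ℝ v)
    (S : Set (EuclideanSpace ℝ (Fin n)))
    (hS : S = convexHull ℝ (Set.range v))
    (U : Set (EuclideanSpace ℝ (Fin mdim)))
    (hUcomp : IsCompact U) (hUconv : Convex ℝ U)
    (hUpoly : ∃ Uf : Finset (EuclideanSpace ℝ (Fin mdim)), U = convexHull ℝ ↑Uf)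
    (W : Set (EuclideanSpace ℝ (Fin n)))
    (hWne : W.Nonempty) (hWconv : Convex ℝ W) (hWcomp : IsCompact W)
    (f : EuclideanSpace ℝ (Fin n) → EuclideanSpace ℝ (Fin n))
    (hf : ContinuousOn f S)
    (g : EuclideanSpace ℝ (Fin n) → Matrix (Fin n) (Fin mdim) ℝ)
    (hg : ∀ l : Fin n, ContinuousOn (fun y => toEuc (g y l)) S)
    (A : Matrix (Fin n) (Fin n) ℝ) (B : Matrix (Fin n) (Fin mdim) ℝ)
    (a : EuclideanSpace ℝ (Fin n))
    (hcons : ∀ x ∈ S, ∀ u ∈ U,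
      f x + toEuc (g x *ᵥ u) - toEuc (A *ᵥ x) - toEuc (B *ᵥ u) - a ∈ W)
    (K : Matrix (Fin mdim) (Fin n) ℝ) (k : EuclideanSpace ℝ (Fin mdim))
    (h : EuclideanSpace ℝ (Fin n) → EuclideanSpace ℝ (Fin mdim))
    (hh : ∀ x, h x = toEuc (K *ᵥ x) + k)
    (hhU : ∀ x ∈ S, h x ∈ U)
    (j : Fin (n + 1))
    (m : EuclideanSpace ℝ (Fin n)) (c : ℝ)
    (hm_unit : ‖m‖ = 1)
    (hm_facet : ∀ i, i ≠ j → m ⬝ᵥ v i = c)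
    (hm_out : m ⬝ᵥ v j < c)
    (hvert : ∀ i, i ≠ j →
      m ⬝ᵥ (toEuc (A *ᵥ v i) + toEuc (B *ᵥ h (v i)) + a)
        ≤ - sSup ((fun w : EuclideanSpace ℝ (Fin n) => m ⬝ᵥ w) '' W))
    (x : EuclideanSpace ℝ (Fin n))
    (hx : x ∈ convexHull ℝ (v '' {i | i ≠ j})) :
    m ⬝ᵥ (f x + toEuc (g x *ᵥ h x)) ≤ 0 :=
  facet_blocked_for_nonlinear_system_general n mdim v S hS U W hWcomp f g A B a hcons K k h hh hhU j
    m hvert x hx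
end
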